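/- Let G be a group with subgroups (G_i)_{i∈I}, I finite with |I| ≥ 2, let B = ∩_{i∈I} G_i, and for each i ∈ I let H_i = ∩_{j∈I, j≠i} G_j. Suppose that for each i ∈ I the subgroup B has index 2 in H_i, and that G is generated by the union of the subgroups H_i (as holds for a regular hypertope by thinness and residual connectedness). Then B is a normal subgroup of G; consequently, if the only normal subgroup of G contained in every G_i is trivial (i.e. G acts faithfully on the coset geometry), then B = 1. -/

import Mathlib

open Pointwise

/-- An incidence system `(X, *, t, I)`. -/
structure IncidenceSystem (X : Type*) (I : Type*) where
  inc : X → X → Prop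
  typ : X → I
  inc_refl : ∀ x, inc x x
  inc_symm : ∀ x y, inc x y → inc y x
  eq_of_inc_of_typ_eq : ∀ x y, inc x y → typ x = typ y → x = y

namespace IncidenceSystem

variable {X : Type*} {I : Type*} (Γ : IncidenceSystem X I)

/-- A flag is a set of pairwise incident elements. -/
def IsFlag (F : Set X) : Prop := ∀ x ∈ F, ∀ y ∈ F, Γ.inc x y

/-- A chamber is a flag of type `I`. -/
def IsChamber (C : Set X) : Prop := Γ.IsFlag C ∧ Γ.typ '' C = Set.univ

/-- An incidence geometry: every flag is contained in a chamber. -/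
def IsGeometry : Prop := ∀ F : Set X, Γ.IsFlag F → ∃ C : Set X, Γ.IsChamber C ∧ F ⊆ C

/-- The set of elements of the residue of a flag `F`: elements outside `F`
incident to every element of `F`. -/
def res (F : Set X) : Set X := {x : X | x ∉ F ∧ ∀ f ∈ F, Γ.inc x f}

/-- The incidence graph induced on a subset `S` is connected. -/
def ConnectedOn (S : Set X) : Prop :=
  S.Nonempty ∧ ∀ x ∈ S, ∀ y ∈ S,
    Relation.ReflTransGen (fun a b : X => a ∈ S ∧ b ∈ S ∧ a ≠ b ∧ Γ.inc a b) x y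

/-- Residual connectedness: the incidence graph of every residue of rank at
least two (including `Γ` itself, the residue of the empty flag) is connected. -/
def ResiduallyConnected : Prop :=
  ∀ F : Set X, Γ.IsFlag F →
    (∃ i j : I, i ≠ j ∧ i ∉ Γ.typ '' F ∧ j ∉ Γ.typ '' F) →
    Γ.ConnectedOn (Γ.res F)

/-- Thinness: every residue of rank one contains exactly two elements. -/
def Thin : Prop :=
  ∀ F : Set X, Γ.IsFlag F → (∃! i : I, i ∉ Γ.typ '' F) →
    ∃ x y : X, x ≠ y ∧ Γ.res F = {x, y}

/-- Firmness: every residue of rank one contains at least two elements. -/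
def Firm : Prop :=
  ∀ F : Set X, Γ.IsFlag F → (∃! i : I, i ∉ Γ.typ '' F) →
    ∃ x y : X, x ≠ y ∧ x ∈ Γ.res F ∧ y ∈ Γ.res F

/-- Two chambers are `i`-adjacent if they differ exactly in their elements of type `i`. -/
def Adjacent (C C' : Set X) (i : I) : Prop :=
  Γ.IsChamber C ∧ Γ.IsChamber C' ∧ C ≠ C' ∧
    {x ∈ C | Γ.typ x ≠ i} = {x ∈ C' | Γ.typ x ≠ i}

/-- Chamber-connectedness of the residue of the flag `F`: any two chambers
containing `F` are linked by a sequence of successively adjacent chambers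
containing `F`. -/
def ChamberConnectedFrom (F : Set X) : Prop :=
  ∀ C C' : Set X, Γ.IsChamber C → Γ.IsChamber C' → F ⊆ C → F ⊆ C' →
    Relation.ReflTransGen
      (fun A B : Set X => F ⊆ A ∧ F ⊆ B ∧ ∃ i : I, Γ.Adjacent A B i) C C'

/-- Strong chamber-connectedness: every residue of rank at least two
(including `Γ` itself) is chamber-connected. -/
def StronglyChamberConnected : Prop :=
  ∀ F : Set X, Γ.IsFlag F →
    (∃ i j : I, i ≠ j ∧ i ∉ Γ.typ '' F ∧ j ∉ Γ.typ '' F) →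
    Γ.ChamberConnectedFrom F

/-- A type-preserving automorphism. -/
def IsAut (φ : Equiv.Perm X) : Prop :=
  (∀ x, Γ.typ (φ x) = Γ.typ x) ∧ ∀ x y, (Γ.inc (φ x) (φ y) ↔ Γ.inc x y)

/-- The group `Aut_I(Γ)` of type-preserving automorphisms. -/
def autGroup : Subgroup (Equiv.Perm X) where
  carrier := {φ : Equiv.Perm X | Γ.IsAut φ}
  one_mem' := ⟨fun _ => rfl, fun _ _ => Iff.rfl⟩
  mul_mem' := by
    rintro φ ψ ⟨ht, hi⟩ ⟨ht', hi'⟩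
    exact ⟨fun x => by rw [Equiv.Perm.mul_apply, ht, ht'],
      fun x y => by rw [Equiv.Perm.mul_apply, Equiv.Perm.mul_apply, hi, hi']⟩
  inv_mem' := by
    rintro φ ⟨ht, hi⟩
    refine ⟨fun x => ?_, fun x y => ?_⟩
    · conv_rhs => rw [← (show φ (φ⁻¹ x) = x from φ.apply_symm_apply x)]
      rw [ht]
    · conv_rhs => rw [← (show φ (φ⁻¹ x) = x from φ.apply_symm_apply x),
        ← (show φ (φ⁻¹ y) = y from φ.apply_symm_apply y)]
      exact (hi _ _).symm

/-- Two chambers are in the same orbit under `Aut_I(Γ)`. -/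
def InSameOrbit (C C' : Set X) : Prop := ∃ φ ∈ Γ.autGroup, ⇑φ '' C = C'

/-- Flag-transitivity: `Aut_I(Γ)` is transitive on the flags of each type. -/
def FlagTransitive : Prop :=
  ∀ F F' : Set X, Γ.IsFlag F → Γ.IsFlag F' → Γ.typ '' F = Γ.typ '' F' →
    ∃ φ ∈ Γ.autGroup, ⇑φ '' F = F'

/-- Chamber-transitivity: `Aut_I(Γ)` is transitive on chambers. -/
def ChamberTransitive : Prop :=
  ∀ C C' : Set X, Γ.IsChamber C → Γ.IsChamber C' → ∃ φ ∈ Γ.autGroup, ⇑φ '' C = C'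

/-- Chirality: `Aut_I(Γ)` has exactly two orbits on chambers, and adjacent
chambers lie in distinct orbits. -/
def Chiral : Prop :=
  (∃ C₁ C₂ : Set X, Γ.IsChamber C₁ ∧ Γ.IsChamber C₂ ∧ ¬ Γ.InSameOrbit C₁ C₂ ∧
    ∀ C : Set X, Γ.IsChamber C → Γ.InSameOrbit C C₁ ∨ Γ.InSameOrbit C C₂) ∧
  ∀ (C C' : Set X) (i : I), Γ.Adjacent C C' i → ¬ Γ.InSameOrbit C C'

/-- The `J`-truncation of `Γ`. -/
def truncation (J : Set I) : IncidenceSystem {x : X // Γ.typ x ∈ J} J where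
  inc p q := Γ.inc p.1 q.1
  typ p := ⟨Γ.typ p.1, p.2⟩
  inc_refl p := Γ.inc_refl p.1
  inc_symm p q h := Γ.inc_symm _ _ h
  eq_of_inc_of_typ_eq p q h ht :=
    Subtype.ext (Γ.eq_of_inc_of_typ_eq _ _ h (congrArg Subtype.val ht))

end IncidenceSystem

section CosetGeometry

variable {G : Type*} [Group G] {ι : Type*}

/-- The right coset `H g`. -/
def rcoset (H : Subgroup G) (g : G) : Set G := {x : G | x * g⁻¹ ∈ H}

lemma mem_rcoset_self (H : Subgroup G) (g : G) : g ∈ rcoset H g := by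
  show g * g⁻¹ ∈ H
  simp only [mul_inv_cancel]
  exact H.one_mem

lemma rcoset_eq_of_mem {H : Subgroup G} {g x : G} (hx : x ∈ rcoset H g) :
    rcoset H x = rcoset H g := by
  ext y
  simp only [rcoset, Set.mem_setOf_eq] at *
  constructor
  · intro hy
    have h2 := H.mul_mem hy hx
    have h3 : y * x⁻¹ * (x * g⁻¹) = y * g⁻¹ := by group
    rwa [h3] at h2
  · intro hy
    have h2 := H.mul_mem hy (H.inv_mem hx)
    have h3 : y * g⁻¹ * (x * g⁻¹)⁻¹ = y * x⁻¹ := by group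
    rwa [h3] at h2

/-- Elements of the coset geometry `Γ(G; (G_i))`: pairs consisting of a type
`i` and a right coset of `G_i`. -/
def CosetElt (Gi : ι → Subgroup G) : Type _ :=
  { p : ι × Set G // ∃ g : G, p.2 = rcoset (Gi p.1) g }

/-- The coset incidence system `Γ(G; (G_i))` of Tits. -/
def cosetGeometry (Gi : ι → Subgroup G) : IncidenceSystem (CosetElt Gi) ι where
  inc p q := (p.1.2 ∩ q.1.2).Nonempty
  typ p := p.1.1
  inc_refl := by
    rintro ⟨⟨i, S⟩, g, hg⟩
    dsimp at hg ⊢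
    subst hg
    exact ⟨g, mem_rcoset_self _ g, mem_rcoset_self _ g⟩
  inc_symm := by
    rintro p q ⟨x, hx1, hx2⟩
    exact ⟨x, hx2, hx1⟩
  eq_of_inc_of_typ_eq := by
    rintro ⟨⟨i, S⟩, hS⟩ ⟨⟨j, T⟩, hT⟩ hinc hij
    obtain ⟨x, hx1, hx2⟩ := hinc
    dsimp at hij hx1 hx2 hS hT
    subst hij
    obtain ⟨g, rfl⟩ := hS
    obtain ⟨h, rfl⟩ := hT
    apply Subtype.ext
    dsimp only
    rw [Prod.mk.injEq]
    exact ⟨rfl, by rw [← rcoset_eq_of_mem hx1, rcoset_eq_of_mem hx2]⟩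

lemma rcoset_image_mul (H : Subgroup G) (g a : G) :
    (fun x : G => x * a) '' rcoset H g = rcoset H (g * a) := by
  ext y
  simp only [rcoset, Set.mem_image, Set.mem_setOf_eq, mul_inv_rev]
  constructor
  · rintro ⟨x, hx, rfl⟩
    have h3 : x * a * (a⁻¹ * g⁻¹) = x * g⁻¹ := by group
    rwa [h3]
  · intro hy
    refine ⟨y * a⁻¹, ?_, by group⟩
    have h3 : y * a⁻¹ * g⁻¹ = y * (a⁻¹ * g⁻¹) := by group
    rwa [h3]

/-- Right multiplication by `a` on the coset geometry. -/
def rmul (Gi : ι → Subgroup G) (a : G) (p : CosetElt Gi) : CosetElt Gi :=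
  ⟨(p.1.1, (fun x : G => x * a) '' p.1.2), by
    obtain ⟨g, hg⟩ := p.2
    exact ⟨g * a, by rw [hg, rcoset_image_mul]⟩⟩

/-- `G` acts flag-transitively on the coset geometry by right multiplication. -/
def GFlagTransitive (Gi : ι → Subgroup G) : Prop :=
  ∀ F F' : Set (CosetElt Gi), (cosetGeometry Gi).IsFlag F → (cosetGeometry Gi).IsFlag F' →
    (cosetGeometry Gi).typ '' F = (cosetGeometry Gi).typ '' F' →
    ∃ a : G, rmul Gi a '' F = F'

/-- Only the identity of `G` fixes a chamber of the coset geometry. -/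
def GFree (Gi : ι → Subgroup G) : Prop :=
  ∀ (a : G) (C : Set (CosetElt Gi)), (cosetGeometry Gi).IsChamber C →
    rmul Gi a '' C = C → a = 1

end CosetGeometry

/-- `(G, ρ)` is a C-group: the `ρ i` are involutions generating `G` and
satisfying the intersection property. -/
def IsCGroup {G : Type*} [Group G] {r : ℕ} (ρ : Fin r → G) : Prop :=
  (∀ i, ρ i ≠ 1 ∧ ρ i * ρ i = 1) ∧
  Subgroup.closure (Set.range ρ) = ⊤ ∧
  ∀ K J : Set (Fin r),
    Subgroup.closure (ρ '' K) ⊓ Subgroup.closure (ρ '' J) =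
      Subgroup.closure (ρ '' (K ∩ J))

/-- The parabolic subgroup `G⁺_K = ⟨α_i⁻¹ α_j : i, j ∈ K⟩` of a `C⁺`-group. -/
def GplusSub {G : Type*} [Group G] {r : ℕ} (α : Fin r → G) (K : Set (Fin r)) : Subgroup G :=
  Subgroup.closure {g : G | ∃ i ∈ K, ∃ j ∈ K, g = (α i)⁻¹ * α j}

lemma aux_le_normalizer {G : Type*} [Group G] {K L : Subgroup G} (hKL : K ≤ L)
    (h2 : K.relIndex L = 2) : L ≤ Subgroup.normalizer (K : Set G) := by
  intro x hx
  rw [Subgroup.mem_normalizer_iff]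
  intro b
  by_cases hbL : b ∈ L
  · have hidx : (K.subgroupOf L).index = 2 := h2
    have h1 := Subgroup.mul_mem_iff_of_index_two hidx
      (a := (⟨x, hx⟩ : L) * ⟨b, hbL⟩) (b := (⟨x, hx⟩ : L)⁻¹)
    have h2' := Subgroup.mul_mem_iff_of_index_two hidx
      (a := (⟨x, hx⟩ : L)) (b := (⟨b, hbL⟩ : L))
    rw [inv_mem_iff] at h1
    have hmem : ((⟨x, hx⟩ : L) * ⟨b, hbL⟩ * (⟨x, hx⟩ : L)⁻¹ ∈ K.subgroupOf L)
        ↔ x * b * x⁻¹ ∈ K := by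
      simp [Subgroup.mem_subgroupOf]
    have hb' : ((⟨b, hbL⟩ : L) ∈ K.subgroupOf L) ↔ b ∈ K := by
      simp [Subgroup.mem_subgroupOf]
    rw [hmem] at h1
    tauto
  · have hL1 : x * b * x⁻¹ ∉ K := fun h => hbL (by
      have : x * b * x⁻¹ ∈ L := hKL h
      have := L.mul_mem (L.mul_mem (L.inv_mem hx) this) hx
      simpa [mul_assoc] using this)
    have hL2 : b ∉ K := fun h => hbL (hKL h)
    tauto


/-- Lemma 3.4: the Borel subgroup of a regular hypertope is normal, hence trivial
when the kernel of the action is trivial. -/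
theorem stmt_12 {G : Type*} [Group G] {ι : Type*} [Finite ι] (hcard : 2 ≤ Nat.card ι)
    (Gi : ι → Subgroup G)
    (hindex : ∀ i : ι,
      (⨅ j : ι, Gi j).relIndex (⨅ j ∈ ({i}ᶜ : Set ι), Gi j) = 2)
    (hgen : (⨆ i : ι, ⨅ j ∈ ({i}ᶜ : Set ι), Gi j) = ⊤) :
    (⨅ j : ι, Gi j).Normal ∧
      ((∀ N : Subgroup G, N.Normal → (∀ i : ι, N ≤ Gi i) → N = ⊥) →
        (⨅ j : ι, Gi j) = ⊥) := by
  set B := ⨅ j : ι, Gi j with hB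
  have hBH : ∀ i : ι, B ≤ ⨅ j ∈ ({i}ᶜ : Set ι), Gi j :=
    fun i => le_iInf fun j => le_iInf fun _ => iInf_le _ j
  have hnorm : B.Normal := by
    rw [← Subgroup.normalizer_eq_top_iff]
    rw [eq_top_iff, ← hgen]
    exact iSup_le fun i => aux_le_normalizer (hBH i) (hindex i)
  refine ⟨hnorm, fun h => h B hnorm fun i => iInf_le _ i⟩
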